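/- For every natural number m ≥ 1, setting N = lcm(4, m) and n = N/4, there exists an injective group homomorphism ψ from the dihedral group D_m of order 2m into the group of bijections of A = A'/⟨w⟩ (where A' = E^{2n} × E' has dimension N/2 + 1 as a complex torus) such that for every g ∈ D_m, ψ(g) is an affine transformation of A (of the form x ↦ α(x) + a with α an additive automorphism of A and a ∈ A), and for every g ≠ 1 in D_m, ψ(g) has no fixed points on A and is not a translation x ↦ x + a. -/

import Mathlib

/-!
`D_{4n}` acts on `A` through `r : z ↦ R z + c` and `s : z ↦ S z + b`, where
`c = (0, …, 0, 1/(4n))`. On `A'` one has `R S R = S`, `R b = b + w` and `S b + b = w`, so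
`r s r = s` and `s² = 1` hold on `A = A'/⟨w⟩`; and `r^{4n} = 1` because `R^{2n} = -1` on
`E^{2n}`. The group `D_m` embeds in `D_{4n}` by `r ↦ r^{4n/m}`.

No nontrivial element has a fixed point: `r^t` (`0 < t < 4n`) moves the last coordinate by
`t/(4n) ∉ Λ'`, and every reflection is conjugate to `s` or `s r`; a fixed point of `s`
modulo `w` would force `b₁ = b_{2n}`, i.e. `1/2 ∈ Λ`, and one of `s r` would force
`τ/2 ∈ ½ℤ + Λ`. No nontrivial element is a translation: reflections negate the last
coordinate, and `R^t` moves `(1/3, 0, …, 0)` modulo `w`.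
-/

noncomputable section

/-- The lattice Λ = ℤ + ℤτ as an additive subgroup of ℂ. -/
def Lam (τ : ℂ) : AddSubgroup ℂ := AddSubgroup.closure {1, τ}

/-- The "elliptic curve" E = ℂ/(ℤ + ℤτ) as an additive group. -/
abbrev Ell (τ : ℂ) : Type := ℂ ⧸ Lam τ

/-- A' = E^{2n} × E'. -/
abbrev Aprime (n : ℕ) (τ τ' : ℂ) : Type := (Fin (2*n) → Ell τ) × Ell τ'

/-- w = (1/2, 1/2, ..., 1/2, 0) ∈ A'. -/
def wpt (n : ℕ) (τ τ' : ℂ) : Aprime n τ τ' :=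
  (fun _ => ((1/2 : ℂ) : Ell τ), 0)

/-- The subgroup ⟨w⟩ of A' generated by w. -/
def wsub (n : ℕ) (τ τ' : ℂ) : AddSubgroup (Aprime n τ τ') :=
  AddSubgroup.closure {wpt n τ τ'}

/-- A = A'/⟨w⟩. -/
abbrev Aq (n : ℕ) (τ τ' : ℂ) : Type := Aprime n τ τ' ⧸ wsub n τ τ'

/-- R(z₁,...,z_{2n},z_{2n+1}) = (-z_{2n}, z₁, ..., z_{2n-1}, z_{2n+1}). -/
def Rmap (n : ℕ) (τ τ' : ℂ) : Aprime n τ τ' → Aprime n τ τ' :=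
  fun z => (fun i =>
    if i.val = 0 then -z.1 ⟨2*n-1, by have := i.isLt; omega⟩
    else z.1 ⟨i.val - 1, by have := i.isLt; omega⟩, z.2)

/-- The class of 1/(4n) in E'. -/
def cE' (n : ℕ) (τ' : ℂ) : Ell τ' := ((1/(4*(n : ℂ)) : ℂ) : Ell τ')

/-- r(z) = R(z) + (0, ..., 0, 1/(4n)). -/
def rmap (n : ℕ) (τ τ' : ℂ) : Aprime n τ τ' → Aprime n τ τ' :=
  fun z => ((Rmap n τ τ' z).1, (Rmap n τ τ' z).2 + cE' n τ')

/-- The translation vector b: b_{2i-1} = 1/2 + τ/2, b_{2i} = τ/2 (1-indexed),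
i.e. in 0-indexed terms, even indices carry 1/2 + τ/2 and odd indices carry τ/2. -/
def bvec (n : ℕ) (τ : ℂ) : Fin (2*n) → Ell τ :=
  fun i => if i.val % 2 = 0 then ((1/2 + τ/2 : ℂ) : Ell τ) else ((τ/2 : ℂ) : Ell τ)

/-- S(z₁,...,z_{2n},z_{2n+1}) = (-z_{2n}, -z_{2n-1}, ..., -z₁, -z_{2n+1}). -/
def Smap (n : ℕ) (τ τ' : ℂ) : Aprime n τ τ' → Aprime n τ τ' :=
  fun z => (fun i => -z.1 ⟨2*n-1-i.val, by have := i.isLt; omega⟩, -z.2)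

/-- s(z) = S(z) + (b₁, ..., b_{2n}, 0). -/
def smap (n : ℕ) (τ τ' : ℂ) : Aprime n τ τ' → Aprime n τ τ' :=
  fun z => (fun i => -z.1 ⟨2*n-1-i.val, by have := i.isLt; omega⟩ + bvec n τ i, -z.2)

section PowVal

variable {N : ℕ} [NeZero N] {G : Type*} [Group G] {a b : G}

lemma pow_val_add_of_pow_eq_one (ha : a ^ N = 1) (i j : ZMod N) :
    a ^ (i + j).val = a ^ i.val * a ^ j.val := by
  rw [ZMod.val_add, ← pow_eq_pow_mod _ ha, pow_add]

lemma pow_val_sub_of_pow_eq_one (ha : a ^ N = 1) (i j : ZMod N) :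
    a ^ (j - i).val = (a ^ i.val)⁻¹ * a ^ j.val := by
  rw [eq_inv_mul_iff_mul_eq, ← pow_val_add_of_pow_eq_one ha, add_sub_cancel]

lemma mul_pow_mul_eq_inv (hb : b * b = 1) (hab : b * a * b = a⁻¹) (k : ℕ) :
    b * a ^ k * b = (a ^ k)⁻¹ := by
  have h := map_pow (MulAut.conj b) a k
  simp only [MulAut.conj_apply, inv_eq_of_mul_eq_one_right hb] at h
  rw [h, hab, inv_pow]

end PowVal

namespace DihedralGroup

variable {N : ℕ} [NeZero N]

section Lift

variable {G : Type*} [Group G]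

def lift (a b : G) (ha : a ^ N = 1) (hb : b * b = 1) (hab : b * a * b = a⁻¹) :
    DihedralGroup N →* G where
  toFun
    | r i => a ^ i.val
    | sr i => b * a ^ i.val
  map_one' := show a ^ (0 : ZMod N).val = 1 by rw [ZMod.val_zero, pow_zero]
  map_mul' := by
    have hconj := mul_pow_mul_eq_inv hb hab
    rintro (i | i) (j | j)
    · simp only [r_mul_r, pow_val_add_of_pow_eq_one ha]
    · simp only [r_mul_sr, pow_val_sub_of_pow_eq_one ha, ← hconj, ← mul_assoc, hb, one_mul]
    · simp only [sr_mul_r, pow_val_add_of_pow_eq_one ha, mul_assoc]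
    · simp only [sr_mul_sr, pow_val_sub_of_pow_eq_one ha, ← hconj, mul_assoc]

variable {a b : G} {ha : a ^ N = 1} {hb : b * b = 1} {hab : b * a * b = a⁻¹}

@[simp] lemma lift_r (i : ZMod N) : lift a b ha hb hab (r i) = a ^ i.val := rfl

@[simp] lemma lift_sr (i : ZMod N) : lift a b ha hb hab (sr i) = b * a ^ i.val := rfl

end Lift

lemma isConj_sr (j : ZMod N) : IsConj (sr ((j.val % 2 : ℕ) : ZMod N)) (sr j) := by
  refine isConj_iff.mpr ⟨r (-((j.val / 2 : ℕ) : ZMod N)), ?_⟩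
  rw [r_mul_sr, inv_r, sr_mul_r]
  congr 1
  conv_rhs => rw [← ZMod.natCast_zmod_val j, ← Nat.mod_add_div j.val 2]
  push_cast
  ring

variable {m : ℕ} [NeZero m]

def ofDvd (h : m ∣ N) : DihedralGroup m →* DihedralGroup N :=
  lift (r (N / m : ℕ)) (sr 0)
    (by rw [r_pow, ← Nat.cast_mul, Nat.div_mul_cancel h, ZMod.natCast_self, r_zero])
    (sr_mul_self 0)
    (by rw [sr_mul_r, sr_mul_sr, inv_r, zero_add, zero_sub])

lemma ofDvd_injective (h : m ∣ N) : Function.Injective (ofDvd h : DihedralGroup m →* _) := by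
  refine (injective_iff_map_eq_one _).mpr ?_
  rintro (i | i) hi
  · simp only [ofDvd, lift_r, r_pow, one_def, r.injEq, ← Nat.cast_mul,
      ZMod.natCast_eq_zero_iff] at hi
    obtain ⟨k, hk⟩ := h
    have hk0 : 0 < k := Nat.pos_of_ne_zero fun h0 => NeZero.ne N (by simp [hk, h0])
    rw [hk, Nat.mul_div_cancel_left _ (Nat.pos_of_neZero m), mul_comm m,
      Nat.mul_dvd_mul_iff_left hk0] at hi
    rw [one_def, (ZMod.val_eq_zero i).mp (Nat.eq_zero_of_dvd_of_lt hi (ZMod.val_lt i))]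
  · simp only [ofDvd, lift_sr, r_pow, sr_mul_r, one_def] at hi
    cases hi

end DihedralGroup

section AffinePerms

variable {G : Type*} [AddGroup G]

def affinePerm (α : G ≃+ G) (a : G) : Equiv.Perm G := α.toEquiv.trans (Equiv.addRight a)

variable (G) in
def affinePerms : Subgroup (Equiv.Perm G) where
  carrier := {f | ∃ α : G ≃+ G, ∃ a : G, ∀ x, f x = α x + a}
  mul_mem' := by
    rintro f g ⟨α, a, hf⟩ ⟨β, b, hg⟩
    exact ⟨β.trans α, α b + a, fun x => by simp [hf, hg, add_assoc]⟩
  one_mem' := ⟨AddEquiv.refl G, 0, fun x => by simp⟩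
  inv_mem' := by
    rintro f ⟨α, a, hf⟩
    refine ⟨α.symm, -α.symm a, fun x => ?_⟩
    rw [Equiv.Perm.inv_eq_iff_eq, hf, map_add, map_neg, AddEquiv.apply_symm_apply,
      AddEquiv.apply_symm_apply, neg_add_cancel_right]

lemma affinePerm_mem (α : G ≃+ G) (a : G) : affinePerm α a ∈ affinePerms G :=
  ⟨α, a, fun _ => rfl⟩

end AffinePerms

lemma iterate_map_add_const {G : Type*} [AddMonoid G] (f : G →+ G) {a : G} (ha : f a = a)
    (t : ℕ) (x : G) : (fun y => f y + a)^[t] x = f^[t] x + t • a := by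
  induction t with
  | zero => simp
  | succ t ih =>
    rw [Function.iterate_succ_apply', ih, Function.iterate_succ_apply', map_add, map_nsmul, ha,
      succ_nsmul, add_assoc]

lemma Equiv.Perm.apply_ne_self_of_isConj {X : Type*} {f g : Equiv.Perm X} (hfg : IsConj f g)
    (hf : ∀ x, f x ≠ x) (x : X) : g x ≠ x := by
  obtain ⟨c, rfl⟩ := isConj_iff.mp hfg
  intro h
  apply hf (c⁻¹ x)
  rw [Equiv.Perm.mul_apply, Equiv.Perm.mul_apply] at h
  exact Equiv.Perm.eq_inv_iff_eq.mpr h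

namespace Ell

variable {τ : ℂ}

lemma exists_int_of_add_mul_mem_Lam (hτ : τ.im ≠ 0) {p q : ℝ}
    (h : (p + q * τ : ℂ) ∈ Lam τ) : ∃ a b : ℤ, p = a ∧ q = b := by
  obtain ⟨a, b, hab⟩ := AddSubgroup.mem_closure_pair.mp h
  simp only [zsmul_eq_mul, mul_one] at hab
  have him := congrArg Complex.im hab
  have hre := congrArg Complex.re hab
  simp only [Complex.add_im, Complex.add_re, Complex.mul_im, Complex.mul_re, Complex.intCast_re,
    Complex.intCast_im, Complex.ofReal_re, Complex.ofReal_im] at him hre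
  have hq : q = b := mul_right_cancel₀ hτ (by linarith)
  exact ⟨a, b, by rw [hq] at hre; linarith, hq⟩

lemma exists_int_eq_of_coe_eq_zero (hτ : τ.im ≠ 0) {p : ℝ} (h : ((p : ℂ) : Ell τ) = 0) :
    ∃ a : ℤ, p = a := by
  obtain ⟨a, -, ha, -⟩ := exists_int_of_add_mul_mem_Lam (q := 0) hτ
    (by simpa using (QuotientAddGroup.eq_zero_iff _).mp h)
  exact ⟨a, ha⟩

lemma coe_add_half_ne_zero (hτ : τ.im ≠ 0) (p : ℝ) : ((p + τ / 2 : ℂ) : Ell τ) ≠ 0 := by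
  intro h
  obtain ⟨-, b, -, hb⟩ := exists_int_of_add_mul_mem_Lam (q := 1 / 2) hτ
    (by convert (QuotientAddGroup.eq_zero_iff _).mp h using 1; push_cast; ring)
  have : (2 * b : ℝ) = 1 := by rw [← hb]; norm_num
  have : 2 * b = 1 := by exact_mod_cast this
  omega

lemma coe_int_add_int_mul_eq_zero (a b : ℤ) : ((a + b * τ : ℂ) : Ell τ) = 0 :=
  (QuotientAddGroup.eq_zero_iff _).mpr <| AddSubgroup.mem_closure_pair.mpr ⟨a, b, by simp⟩

lemma coe_eq_coe_of_sub_eq (a b : ℤ) {x y : ℂ} (h : x - y = a + b * τ) :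
    (x : Ell τ) = y := by
  rw [QuotientAddGroup.eq_iff_sub_mem, ← QuotientAddGroup.eq_zero_iff, h]
  exact coe_int_add_int_mul_eq_zero a b

lemma coe_neg_half : ((-(1 / 2) : ℂ) : Ell τ) = ((1 / 2 : ℂ) : Ell τ) :=
  coe_eq_coe_of_sub_eq (-1) 0 (by push_cast; ring)

end Ell

namespace Aprime

variable {n : ℕ} {τ τ' : ℂ}

lemma fst_congr (z : Aprime n τ τ') {i j : Fin (2 * n)} (h : i.val = j.val) : z.1 i = z.1 j :=
  congrArg z.1 (Fin.ext h)

def cpt (n : ℕ) (τ τ' : ℂ) : Aprime n τ τ' := (0, cE' n τ')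

def bpt (n : ℕ) (τ τ' : ℂ) : Aprime n τ τ' := (bvec n τ, 0)

lemma Smap_Smap (z : Aprime n τ τ') : Smap n τ τ' (Smap n τ τ' z) = z := by
  refine Prod.ext (funext fun i => ?_) (neg_neg _)
  simp only [Smap, neg_neg]
  exact fst_congr z (by dsimp only; omega)

lemma Rmap_Smap_Rmap (z : Aprime n τ τ') :
    Rmap n τ τ' (Smap n τ τ' (Rmap n τ τ' z)) = Smap n τ τ' z := by
  refine Prod.ext (funext fun i => ?_) rfl
  simp only [Rmap, Smap]
  split_ifs <;>
    first
    | omega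
    | (simp only [neg_neg, neg_inj]; exact fst_congr z (by dsimp only; omega))

def Sequiv (n : ℕ) (τ τ' : ℂ) : Aprime n τ τ' ≃+ Aprime n τ τ' where
  toFun := Smap n τ τ'
  invFun := Smap n τ τ'
  left_inv := Smap_Smap
  right_inv := Smap_Smap
  map_add' _ _ := Prod.ext (funext fun _ => neg_add _ _) (neg_add _ _)

def Requiv (n : ℕ) (τ τ' : ℂ) : Aprime n τ τ' ≃+ Aprime n τ τ' where
  toFun := Rmap n τ τ'
  invFun := Smap n τ τ' ∘ Rmap n τ τ' ∘ Smap n τ τ'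
  left_inv z := by simp only [Function.comp, Rmap_Smap_Rmap, Smap_Smap]
  right_inv z := by simp only [Function.comp, Rmap_Smap_Rmap (Smap n τ τ' z), Smap_Smap]
  map_add' z z' := by
    refine Prod.ext (funext fun i => ?_) rfl
    simp only [Rmap, Prod.fst_add, Pi.add_apply]
    split_ifs <;> abel

lemma Requiv_apply (z : Aprime n τ τ') : Requiv n τ τ' z = Rmap n τ τ' z := rfl

lemma Sequiv_apply (z : Aprime n τ τ') : Sequiv n τ τ' z = Smap n τ τ' z := rfl

lemma Sequiv_Sequiv (z : Aprime n τ τ') : Sequiv n τ τ' (Sequiv n τ τ' z) = z := Smap_Smap z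

lemma Requiv_Sequiv_Requiv (z : Aprime n τ τ') :
    Requiv n τ τ' (Sequiv n τ τ' (Requiv n τ τ' z)) = Sequiv n τ τ' z :=
  Rmap_Smap_Rmap z

lemma rmap_eq (z : Aprime n τ τ') : rmap n τ τ' z = Requiv n τ τ' z + cpt n τ τ' :=
  Prod.ext (add_zero _).symm rfl

lemma smap_eq (z : Aprime n τ τ') : smap n τ τ' z = Sequiv n τ τ' z + bpt n τ τ' :=
  Prod.ext rfl (add_zero _).symm

lemma Requiv_wpt : Requiv n τ τ' (wpt n τ τ') = wpt n τ τ' := by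
  refine Prod.ext (funext fun i => ?_) rfl
  simp only [Requiv_apply, Rmap, wpt]
  split_ifs
  · exact Ell.coe_neg_half
  · rfl

lemma Sequiv_wpt : Sequiv n τ τ' (wpt n τ τ') = wpt n τ τ' :=
  Prod.ext (funext fun _ => Ell.coe_neg_half) neg_zero

lemma Requiv_cpt : Requiv n τ τ' (cpt n τ τ') = cpt n τ τ' := by
  refine Prod.ext (funext fun i => ?_) rfl
  simp [Requiv_apply, Rmap, cpt]

lemma Sequiv_cpt : Sequiv n τ τ' (cpt n τ τ') = -cpt n τ τ' := rfl

lemma Requiv_bpt : Requiv n τ τ' (bpt n τ τ') = bpt n τ τ' + wpt n τ τ' := by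
  refine Prod.ext (funext fun i => ?_) (add_zero _).symm
  simp only [Requiv_apply, Rmap, bpt, wpt, bvec, Prod.fst_add, Pi.add_apply]
  split_ifs <;> first | omega | skip
  all_goals simp only [← QuotientAddGroup.mk_neg, ← QuotientAddGroup.mk_add]
  · exact Ell.coe_eq_coe_of_sub_eq (-1) (-1) (by push_cast; ring)
  · exact Ell.coe_eq_coe_of_sub_eq 0 0 (by push_cast; ring)
  · exact Ell.coe_eq_coe_of_sub_eq (-1) 0 (by push_cast; ring)

lemma Sequiv_bpt_add_bpt : Sequiv n τ τ' (bpt n τ τ') + bpt n τ τ' = wpt n τ τ' := by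
  refine Prod.ext (funext fun i => ?_) (neg_add_cancel _)
  simp only [Sequiv_apply, Smap, bpt, wpt, bvec, Prod.fst_add, Pi.add_apply]
  split_ifs <;> first | omega | skip
  all_goals simp only [← QuotientAddGroup.mk_neg, ← QuotientAddGroup.mk_add]
  · exact Ell.coe_eq_coe_of_sub_eq (-1) 0 (by push_cast; ring)
  · exact Ell.coe_eq_coe_of_sub_eq 0 0 (by push_cast; ring)

lemma smap_smap (z : Aprime n τ τ') : smap n τ τ' (smap n τ τ' z) = z + wpt n τ τ' := by
  rw [smap_eq, smap_eq, map_add, Sequiv_Sequiv, add_assoc, Sequiv_bpt_add_bpt]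

lemma rmap_smap_rmap (z : Aprime n τ τ') :
    rmap n τ τ' (smap n τ τ' (rmap n τ τ' z)) = smap n τ τ' z + wpt n τ τ' := by
  rw [rmap_eq, smap_eq, rmap_eq, map_add, map_add, map_add, Sequiv_cpt, map_neg, Requiv_cpt,
    Requiv_Sequiv_Requiv, Requiv_bpt, smap_eq]
  abel

lemma Rmap_fst (z : Aprime n τ τ') (i : Fin (2 * n)) :
    (Rmap n τ τ' z).1 i =
      if i.val = 0 then -z.1 ⟨2 * n - 1, by have := i.isLt; omega⟩
      else z.1 ⟨i.val - 1, by have := i.isLt; omega⟩ := rfl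

lemma smap_fst (z : Aprime n τ τ') {i j : Fin (2 * n)} (hij : i.val + j.val = 2 * n - 1) :
    (smap n τ τ' z).1 i = -z.1 j + bvec n τ i := by
  rw [← fst_congr z (i := ⟨2 * n - 1 - i.val, by have := i.isLt; omega⟩)
    (by dsimp only; omega)]
  rfl

lemma Rmap_iterate_snd (t : ℕ) (z : Aprime n τ τ') : ((Rmap n τ τ')^[t] z).2 = z.2 := by
  induction t with
  | zero => rfl
  | succ t ih => rw [Function.iterate_succ_apply']; exact ih

lemma Rmap_iterate_fst {t : ℕ} (ht : t ≤ 2 * n) (z : Aprime n τ τ') (i : Fin (2 * n)) :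
    ((Rmap n τ τ')^[t] z).1 i =
      if h : t ≤ i.val then z.1 ⟨i.val - t, by omega⟩
      else -z.1 ⟨i.val + 2 * n - t, by omega⟩ := by
  induction t generalizing i with
  | zero => simp
  | succ t ih =>
    rw [Function.iterate_succ_apply', Rmap_fst]
    split_ifs <;> rw [ih (by omega)] <;> dsimp only <;> split_ifs <;>
      first
      | omega
      | exact fst_congr z (by dsimp only <;> omega)
      | exact congrArg Neg.neg (fst_congr z (by dsimp only; omega))

lemma Rmap_iterate_two_mul (z : Aprime n τ τ') : (Rmap n τ τ')^[2 * n] z = (-z.1, z.2) := by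
  refine Prod.ext (funext fun i => ?_) (Rmap_iterate_snd _ z)
  rw [Rmap_iterate_fst le_rfl, dif_neg (by omega)]
  exact congrArg Neg.neg (fst_congr z (by dsimp only; omega))

lemma Rmap_iterate_four_mul (z : Aprime n τ τ') : (Rmap n τ τ')^[4 * n] z = z := by
  rw [show 4 * n = 2 * n + 2 * n by ring, Function.iterate_add_apply, Rmap_iterate_two_mul,
    Rmap_iterate_two_mul, neg_neg]

lemma Rmap_iterate_fst_zero {t : ℕ} (ht0 : 0 < t) (ht : t < 4 * n) (q : Ell τ) :
    ((Rmap n τ τ')^[t] ((fun i => if i.val = 0 then q else 0, 0) : Aprime n τ τ')).1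
      ⟨0, by omega⟩ = if t = 2 * n then -q else 0 := by
  rcases le_or_gt t (2 * n) with h | h
  · rw [Rmap_iterate_fst h, dif_neg (by dsimp only; omega)]
    dsimp only
    split_ifs <;> first | omega | simp
  · obtain ⟨s, rfl⟩ : ∃ s, t = s + 2 * n := ⟨t - 2 * n, by omega⟩
    rw [Function.iterate_add_apply, Rmap_iterate_two_mul, Rmap_iterate_fst (by omega),
      dif_neg (by dsimp only; omega)]
    simp only [Pi.neg_apply, neg_neg]
    split_ifs <;> first | omega | simp

lemma rmap_iterate (t : ℕ) (z : Aprime n τ τ') :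
    (rmap n τ τ')^[t] z = (Rmap n τ τ')^[t] z + t • cpt n τ τ' := by
  have h : rmap n τ τ' =
      fun y => (Requiv n τ τ' : Aprime n τ τ' →+ Aprime n τ τ') y + cpt n τ τ' :=
    funext rmap_eq
  rw [h, iterate_map_add_const _ Requiv_cpt]
  rfl

lemma zsmul_wpt_fst (k : ℤ) (i : Fin (2 * n)) :
    (k • wpt n τ τ').1 i = (((k / 2 : ℝ) : ℂ) : Ell τ) := by
  change k • ((1 / 2 : ℂ) : Ell τ) = _
  rw [← QuotientAddGroup.mk_zsmul, zsmul_eq_mul]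
  push_cast
  ring_nf

lemma nsmul_cE' (t : ℕ) : t • cE' n τ' = (((t / (4 * n) : ℝ) : ℂ) : Ell τ') := by
  rw [cE', ← QuotientAddGroup.mk_nsmul, nsmul_eq_mul]
  congr 1
  push_cast
  ring

lemma four_mul_smul_cpt : (4 * n) • cpt n τ τ' = 0 := by
  refine Prod.ext (smul_zero (4 * n) : (4 * n) • (0 : Fin (2 * n) → Ell τ) = 0) ?_
  obtain rfl | hn := eq_or_ne n 0
  · simp
  · change (4 * n) • cE' n τ' = 0
    rw [nsmul_cE', Nat.cast_mul, Nat.cast_ofNat, div_self (by positivity)]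
    convert Ell.coe_int_add_int_mul_eq_zero (τ := τ') 1 0 using 2
    push_cast
    ring

end Aprime

namespace Aq

open Aprime

variable {n : ℕ} {τ τ' : ℂ}

lemma coe_eq_coe_iff {z z' : Aprime n τ τ'} :
    (z : Aq n τ τ') = z' ↔ ∃ k : ℤ, z' = z + k • wpt n τ τ' := by
  rw [QuotientAddGroup.eq, wsub, AddSubgroup.mem_closure_singleton]
  exact exists_congr fun k => by rw [eq_neg_add_iff_add_eq, eq_comm]

lemma coe_add_wpt (z : Aprime n τ τ') :
    ((z + wpt n τ τ' : Aprime n τ τ') : Aq n τ τ') = z :=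
  coe_eq_coe_iff.mpr ⟨-1, by rw [neg_one_zsmul, add_neg_cancel_right]⟩

lemma map_wsub_of_map_wpt {f : Aprime n τ τ' ≃+ Aprime n τ τ'}
    (hf : f (wpt n τ τ') = wpt n τ τ') :
    (wsub n τ τ').map (f : Aprime n τ τ' →+ Aprime n τ τ') = wsub n τ τ' := by
  rw [wsub, AddMonoidHom.map_closure, Set.image_singleton]
  exact congrArg (fun w => AddSubgroup.closure {w}) hf

def rotationLinear (n : ℕ) (τ τ' : ℂ) : Aq n τ τ' ≃+ Aq n τ τ' :=
  QuotientAddGroup.congr _ _ (Requiv n τ τ') (map_wsub_of_map_wpt Requiv_wpt)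

def reflectionLinear (n : ℕ) (τ τ' : ℂ) : Aq n τ τ' ≃+ Aq n τ τ' :=
  QuotientAddGroup.congr _ _ (Sequiv n τ τ') (map_wsub_of_map_wpt Sequiv_wpt)

def rotation (n : ℕ) (τ τ' : ℂ) : Equiv.Perm (Aq n τ τ') :=
  affinePerm (rotationLinear n τ τ') (cpt n τ τ')

def reflection (n : ℕ) (τ τ' : ℂ) : Equiv.Perm (Aq n τ τ') :=
  affinePerm (reflectionLinear n τ τ') (bpt n τ τ')

lemma rotation_coe (z : Aprime n τ τ') :
    rotation n τ τ' z = (rmap n τ τ' z : Aq n τ τ') := by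
  rw [rmap_eq]
  rfl

lemma reflection_coe (z : Aprime n τ τ') :
    reflection n τ τ' z = (smap n τ τ' z : Aq n τ τ') := by
  rw [smap_eq]
  rfl

lemma reflection_mul_self : reflection n τ τ' * reflection n τ τ' = 1 := by
  ext x
  induction x using QuotientAddGroup.induction_on with | H z => ?_
  rw [Equiv.Perm.mul_apply, reflection_coe, reflection_coe, smap_smap, coe_add_wpt,
    Equiv.Perm.one_apply]

lemma rotation_mul_reflection_mul_rotation :
    rotation n τ τ' * reflection n τ τ' * rotation n τ τ' = reflection n τ τ' := by
  ext x
  induction x using QuotientAddGroup.induction_on with | H z => ?_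
  rw [Equiv.Perm.mul_apply, Equiv.Perm.mul_apply, rotation_coe, reflection_coe, rotation_coe,
    rmap_smap_rmap, coe_add_wpt, reflection_coe]

lemma reflection_mul_rotation_mul_reflection :
    reflection n τ τ' * rotation n τ τ' * reflection n τ τ' = (rotation n τ τ')⁻¹ := by
  refine eq_inv_of_mul_eq_one_left ?_
  calc _ = reflection n τ τ' * (rotation n τ τ' * reflection n τ τ' * rotation n τ τ') := by group
    _ = 1 := by rw [rotation_mul_reflection_mul_rotation, reflection_mul_self]

lemma rotation_pow_coe (t : ℕ) (z : Aprime n τ τ') :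
    (rotation n τ τ' ^ t) z = ((Rmap n τ τ')^[t] z + t • cpt n τ τ' : Aprime n τ τ') := by
  rw [Equiv.Perm.coe_pow, ← rmap_iterate]
  exact (Function.Semiconj.iterate_right (fun z => (rotation_coe z).symm) t z).symm

lemma rotation_pow_four_mul : rotation n τ τ' ^ (4 * n) = 1 := by
  ext x
  induction x using QuotientAddGroup.induction_on with | H z => ?_
  rw [rotation_pow_coe, Rmap_iterate_four_mul, four_mul_smul_cpt, add_zero,
    Equiv.Perm.one_apply]

def lastCoord (n : ℕ) (τ τ' : ℂ) : Aq n τ τ' →+ Ell τ' :=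
  QuotientAddGroup.lift _ (AddMonoidHom.snd _ _)
    ((AddSubgroup.closure_le _).mpr (Set.singleton_subset_iff.mpr rfl))

lemma lastCoord_coe (z : Aprime n τ τ') : lastCoord n τ τ' z = z.2 := rfl

lemma lastCoord_rotation_pow (t : ℕ) (x : Aq n τ τ') :
    lastCoord n τ τ' ((rotation n τ τ' ^ t) x) = lastCoord n τ τ' x + t • cE' n τ' := by
  induction x using QuotientAddGroup.induction_on with | H z => ?_
  rw [rotation_pow_coe, lastCoord_coe, Prod.snd_add, Rmap_iterate_snd]
  rfl

lemma lastCoord_reflection (x : Aq n τ τ') :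
    lastCoord n τ τ' (reflection n τ τ' x) = -lastCoord n τ τ' x := by
  induction x using QuotientAddGroup.induction_on with | H z => ?_
  rw [reflection_coe, lastCoord_coe, lastCoord_coe]
  rfl

lemma rotation_pow_apply_ne (hτ' : τ'.im ≠ 0) {t : ℕ} (ht0 : 0 < t) (ht : t < 4 * n)
    (x : Aq n τ τ') : (rotation n τ τ' ^ t) x ≠ x := by
  intro h
  have h' := congrArg (lastCoord n τ τ') h
  rw [lastCoord_rotation_pow, add_eq_left, nsmul_cE'] at h'
  obtain ⟨a, ha⟩ := Ell.exists_int_eq_of_coe_eq_zero hτ' h'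
  have hn : (0 : ℝ) < 4 * n := by exact_mod_cast (by omega : 0 < 4 * n)
  have h0 : (0 : ℝ) < a := ha ▸ div_pos (by exact_mod_cast ht0) hn
  have h1 : (a : ℝ) < 1 := ha ▸ (div_lt_one hn).mpr (by exact_mod_cast ht)
  have : (0 : ℤ) < a := by exact_mod_cast h0
  have : a < 1 := by exact_mod_cast h1
  omega

lemma reflection_apply_ne (hn : 0 < n) (hτ : τ.im ≠ 0) (x : Aq n τ τ') :
    reflection n τ τ' x ≠ x := by
  induction x using QuotientAddGroup.induction_on with | H z => ?_
  rw [reflection_coe]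
  intro h
  obtain ⟨k, hk⟩ := coe_eq_coe_iff.mp h
  have h0 := congrArg (fun y => y.1 ⟨0, by omega⟩) hk
  have h1 := congrArg (fun y => y.1 ⟨2 * n - 1, by omega⟩) hk
  simp only [Prod.fst_add, Pi.add_apply, zsmul_wpt_fst] at h0 h1
  rw [smap_fst z (j := ⟨2 * n - 1, by omega⟩) (by dsimp only; omega)] at h0
  rw [smap_fst z (j := ⟨0, by omega⟩) (by dsimp only; omega)] at h1
  have hb : bvec n τ ⟨0, by omega⟩ = bvec n τ ⟨2 * n - 1, by omega⟩ := by
    linear_combination (norm := abel) h1 - h0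
  rw [bvec, bvec, if_pos (by rfl), if_neg (by dsimp only; omega)] at hb
  obtain ⟨a, ha⟩ := Ell.exists_int_eq_of_coe_eq_zero (p := 1 / 2) hτ <| by
    rw [← sub_eq_zero.mpr hb, ← QuotientAddGroup.mk_sub]
    congr 1
    push_cast
    ring
  have : (2 * a : ℝ) = 1 := by rw [← ha]; ring
  have : 2 * a = 1 := by exact_mod_cast this
  omega

lemma reflection_mul_rotation_apply_ne (hn : 0 < n) (hτ : τ.im ≠ 0) (x : Aq n τ τ') :
    (reflection n τ τ' * rotation n τ τ') x ≠ x := by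
  induction x using QuotientAddGroup.induction_on with | H z => ?_
  rw [Equiv.Perm.mul_apply, rotation_coe, reflection_coe]
  intro h
  obtain ⟨k, hk⟩ := coe_eq_coe_iff.mp h
  have h1 := congrArg (fun y => y.1 ⟨2 * n - 1, by omega⟩) hk
  simp only [Prod.fst_add, Pi.add_apply, zsmul_wpt_fst] at h1
  rw [smap_fst _ (j := ⟨0, by omega⟩) (by dsimp only; omega)] at h1
  have hr : (rmap n τ τ' z).1 ⟨0, by omega⟩ = -z.1 ⟨2 * n - 1, by omega⟩ :=
    (Rmap_fst z ⟨0, by omega⟩).trans (if_pos rfl)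
  rw [hr, neg_neg, bvec, if_neg (by dsimp only; omega), add_assoc, left_eq_add] at h1
  apply Ell.coe_add_half_ne_zero hτ (k / 2)
  rw [QuotientAddGroup.mk_add, add_comm]
  exact h1

lemma rotation_pow_not_translation (hτ : τ.im ≠ 0) {t : ℕ} (ht0 : 0 < t) (ht : t < 4 * n) :
    ¬ ∃ a : Aq n τ τ', ∀ x, (rotation n τ τ' ^ t) x = x + a := by
  rintro ⟨a, ha⟩
  have hlin (z : Aprime n τ τ') :
      ∃ k : ℤ, z = (Rmap n τ τ')^[t] z + k • wpt n τ τ' := by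
    have h0 : (rotation n τ τ' ^ t) 0 = a := (ha 0).trans (zero_add a)
    rw [← QuotientAddGroup.mk_zero, rotation_pow_coe,
      Function.iterate_fixed (f := Rmap n τ τ') (map_zero (Requiv n τ τ')), zero_add] at h0
    have h1 := ha z
    rw [rotation_pow_coe, ← h0, ← QuotientAddGroup.mk_add, coe_eq_coe_iff] at h1
    obtain ⟨k, hk⟩ := h1
    exact ⟨k, add_right_cancel (hk.trans (add_right_comm _ _ _))⟩
  -- `R^t` turns the first coordinate of `(1/3, 0, …, 0)` into `0` or `-1/3`, and neither
  -- `1/3` nor `2/3` lies in `½ℤ`.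
  set q : Ell τ := (((1 / 3 : ℝ) : ℂ) : Ell τ)
  obtain ⟨k, hk⟩ := hlin (fun i => if i.val = 0 then q else 0, 0)
  have h := congrArg (fun y => y.1 ⟨0, by omega⟩) hk
  rw [Prod.fst_add, Pi.add_apply, Rmap_iterate_fst_zero ht0 ht, zsmul_wpt_fst] at h
  dsimp only at h
  rw [if_pos rfl] at h
  split_ifs at h
  · obtain ⟨a, ha⟩ := Ell.exists_int_eq_of_coe_eq_zero (p := 2 / 3 - k / 2) hτ <| by
      rw [show ((2 / 3 - k / 2 : ℝ) : ℂ) =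
          ((1 / 3 : ℝ) : ℂ) - -((1 / 3 : ℝ) : ℂ) - ((k / 2 : ℝ) : ℂ) by push_cast; ring,
        QuotientAddGroup.mk_sub, QuotientAddGroup.mk_sub, QuotientAddGroup.mk_neg]
      linear_combination (norm := abel) h
    have : (6 * a : ℝ) = 4 - 3 * k := by rw [← ha]; ring
    have : 6 * a = 4 - 3 * k := by exact_mod_cast this
    omega
  · obtain ⟨a, ha⟩ := Ell.exists_int_eq_of_coe_eq_zero (p := 1 / 3 - k / 2) hτ <| by
      rw [show ((1 / 3 - k / 2 : ℝ) : ℂ) = ((1 / 3 : ℝ) : ℂ) - ((k / 2 : ℝ) : ℂ) by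
          push_cast; ring,
        QuotientAddGroup.mk_sub]
      linear_combination (norm := abel) h
    have : (6 * a : ℝ) = 2 - 3 * k := by rw [← ha]; ring
    have : 6 * a = 2 - 3 * k := by exact_mod_cast this
    omega

lemma reflection_mul_rotation_pow_not_translation (hτ' : τ'.im ≠ 0) (t : ℕ) :
    ¬ ∃ a : Aq n τ τ', ∀ x, (reflection n τ τ' * rotation n τ τ' ^ t) x = x + a := by
  rintro ⟨a, ha⟩
  have hL (x : Aq n τ τ') :
      -(lastCoord n τ τ' x + t • cE' n τ') = lastCoord n τ τ' x + lastCoord n τ τ' a := by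
    rw [← lastCoord_rotation_pow, ← lastCoord_reflection, ← Equiv.Perm.mul_apply, ha, map_add]
  have h0 := hL 0
  have h1 := hL ((0, (((1 / 4 : ℝ) : ℂ) : Ell τ')) : Aprime n τ τ')
  rw [map_zero] at h0
  rw [lastCoord_coe] at h1
  obtain ⟨b, hb⟩ := Ell.exists_int_eq_of_coe_eq_zero (p := 1 / 2) hτ' <| by
    rw [show ((1 / 2 : ℝ) : ℂ) = ((1 / 4 : ℝ) : ℂ) + ((1 / 4 : ℝ) : ℂ) by
        push_cast; ring,
      QuotientAddGroup.mk_add]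
    linear_combination (norm := abel) h0 - h1
  have : (2 * b : ℝ) = 1 := by rw [← hb]; ring
  have : 2 * b = 1 := by exact_mod_cast this
  omega

def dihedralAction (n : ℕ) [NeZero n] (τ τ' : ℂ) :
    DihedralGroup (4 * n) →* Equiv.Perm (Aq n τ τ') :=
  DihedralGroup.lift (rotation n τ τ') (reflection n τ τ') rotation_pow_four_mul
    reflection_mul_self reflection_mul_rotation_mul_reflection

variable [NeZero n]

lemma dihedralAction_mem_affinePerms (g : DihedralGroup (4 * n)) :
    dihedralAction n τ τ' g ∈ affinePerms (Aq n τ τ') := by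
  cases g with
  | r i => exact pow_mem (affinePerm_mem _ _) _
  | sr i => exact mul_mem (affinePerm_mem _ _) (pow_mem (affinePerm_mem _ _) _)

lemma dihedralAction_apply_ne (hτ : τ.im ≠ 0) (hτ' : τ'.im ≠ 0) {g : DihedralGroup (4 * n)}
    (hg : g ≠ 1) (x : Aq n τ τ') : dihedralAction n τ τ' g x ≠ x := by
  cases g with
  | r i =>
    have hi : i ≠ 0 := by rintro rfl; exact hg DihedralGroup.r_zero
    exact rotation_pow_apply_ne hτ' (ZMod.val_pos.mpr hi) (ZMod.val_lt i) x
  | sr i =>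
    refine Equiv.Perm.apply_ne_self_of_isConj
      ((dihedralAction n τ τ').map_isConj (DihedralGroup.isConj_sr i)) ?_ x
    have hn := NeZero.pos n
    rw [dihedralAction, DihedralGroup.lift_sr, ZMod.val_cast_of_lt (by omega)]
    obtain h | h := Nat.mod_two_eq_zero_or_one i.val <;> rw [h]
    · simpa using reflection_apply_ne hn hτ
    · simpa using reflection_mul_rotation_apply_ne hn hτ

lemma dihedralAction_injective (hτ : τ.im ≠ 0) (hτ' : τ'.im ≠ 0) :
    Function.Injective (dihedralAction n τ τ') :=
  (injective_iff_map_eq_one _).mpr fun g hg => by_contra fun h =>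
    dihedralAction_apply_ne hτ hτ' h 0 (by rw [hg]; rfl)

lemma dihedralAction_not_translation (hτ : τ.im ≠ 0) (hτ' : τ'.im ≠ 0)
    {g : DihedralGroup (4 * n)} (hg : g ≠ 1) :
    ¬ ∃ a : Aq n τ τ', ∀ x, dihedralAction n τ τ' g x = x + a := by
  cases g with
  | r i =>
    have hi : i ≠ 0 := by rintro rfl; exact hg DihedralGroup.r_zero
    exact rotation_pow_not_translation hτ (ZMod.val_pos.mpr hi) (ZMod.val_lt i)
  | sr i => exact reflection_mul_rotation_pow_not_translation hτ' i.val

end Aq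

open Aq

/-- for any m ≥ 1, with N = lcm(4, m) and n = N/4, the dihedral group D_m
embeds into the bijections of A = A'/⟨w⟩ (A' = E^{2n} × E' of dimension N/2 + 1), acting
by affine transformations, freely, and without translations. -/
theorem stmt_18 (m : ℕ) (hm : 1 ≤ m) (τ τ' : ℂ) (hτ : τ.im ≠ 0) (hτ' : τ'.im ≠ 0) :
    ∃ ψ : DihedralGroup m →* Equiv.Perm (Aq (Nat.lcm 4 m / 4) τ τ'),
      Function.Injective ψ ∧
      (∀ g : DihedralGroup m,
        ∃ α : Aq (Nat.lcm 4 m / 4) τ τ' ≃+ Aq (Nat.lcm 4 m / 4) τ τ',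
        ∃ a : Aq (Nat.lcm 4 m / 4) τ τ',
          ∀ x, ψ g x = α x + a) ∧
      (∀ g : DihedralGroup m, g ≠ 1 →
        (∀ x, ψ g x ≠ x) ∧
        ¬ ∃ a : Aq (Nat.lcm 4 m / 4) τ τ', ∀ x, ψ g x = x + a) := by
  have : NeZero m := ⟨by omega⟩
  set n := Nat.lcm 4 m / 4
  have h4n : 4 * n = Nat.lcm 4 m := Nat.mul_div_cancel' (Nat.dvd_lcm_left 4 m)
  have : NeZero n := ⟨fun h => Nat.lcm_ne_zero four_ne_zero (NeZero.ne m) (by omega)⟩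
  have hdvd : m ∣ 4 * n := h4n ▸ Nat.dvd_lcm_right 4 m
  have hinj := DihedralGroup.ofDvd_injective hdvd
  refine ⟨(dihedralAction n τ τ').comp (DihedralGroup.ofDvd hdvd),
    (dihedralAction_injective hτ hτ').comp hinj, fun g => dihedralAction_mem_affinePerms _,
    fun g hg => ?_⟩
  have hg' : DihedralGroup.ofDvd hdvd g ≠ 1 := (map_ne_one_iff _ hinj).mpr hg
  exact ⟨dihedralAction_apply_ne hτ hτ' hg', dihedralAction_not_translation hτ hτ' hg'⟩
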